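/- Let m, n be integers with 2 < m ≤ n and let k ≥ 1 be an integer. Define, for integers t₁, t₂: P(t₁,t₂) = C(m−1,t₁)C(n−1,t₁)C(m−1,t₂)C(n−1,t₂); P₁(t₁,t₂) = C(m−1,t₁)C(n−2,t₁)C(m−1,t₂)C(n−2,t₂); P₂(t₁,t₂) = C(m−1,t₂+1)C(n−2,t₂)C(m−1,t₁−1)C(n−2,t₁); P₃(t₁,t₂) = C(m,t₂)C(n,t₁+1)C(m−1,t₁)C(n−2,t₂−1); P₄(t₁,t₂) = C(m−1,t₁)C(n,t₂)C(m−1,t₂−1)C(n−2,t₁). Then the sum over all pairs of integers (t₁,t₂) with t₁+t₂ = k of [P₁(t₁,t₂) − P₂(t₁,t₂) + P₃(t₁,t₂) − P₄(t₁,t₂) − P(t₁,t₂)] equals 0. -/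

import Mathlib

/-!
Write `[a b c d]` (`convSum p q k a b c d`) for
`∑_{t₁ + t₂ = k} C(p, t₁ + a) C(q, t₁ + b) C(p, t₂ + c) C(q, t₂ + d)` with `p = m - 1`, `q = n - 2`. Pascal's rule expresses every coefficient through `C(p, ·)` and
`C(q, ·)`, and after the pointwise cancellations the sum becomes
`([0 1 0 -1] - [-1 0 1 0]) + ([0 0 0 -1] - [0 -1 0 0]) + ([0 1 -1 -1] - [0 0 -1 0])`
`+ ([0 -1 -1 -1] - [0 0 -1 -2])`. Each bracket vanishes, because the reindexing `t₁ ↦ t₁ + 1`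
gives `[a b c d] = [a+1 b+1 c-1 d-1]` and the reflection `t₁ ↔ t₂` gives
`[a b c d] = [c d a b]`.
-/

/-- Generalized binomial coefficient `C(s,a)` for integers `s, a`:
`C(s,a) = s(s-1)⋯(s-a+1)/a!` if `a ≥ 0`, and `0` if `a < 0`. -/
noncomputable def C (s a : ℤ) : ℚ :=
  if a < 0 then 0 else (∏ i ∈ Finset.range a.toNat, ((s : ℚ) - i)) / (a.toNat.factorial : ℚ)

lemma C_of_neg {s a : ℤ} (h : a < 0) : C s a = 0 := if_pos h

lemma C_natCast (s : ℤ) (a : ℕ) : C s a = Ring.choose (s : ℚ) a := by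
  rw [C, if_neg (by omega), Ring.choose_eq_smul, ← Polynomial.aeval_eq_smeval,
    Polynomial.aeval_def, Polynomial.eval₂_eq_eval_map, descPochhammer_map,
    descPochhammer_eval_eq_prod_range, Int.toNat_natCast, smul_eq_mul, div_eq_inv_mul]

lemma C_pascal (s a : ℤ) : C s a = C (s - 1) a + C (s - 1) (a - 1) := by
  rcases lt_or_ge a 0 with h | h
  · simp [C_of_neg h, C_of_neg (by omega : a - 1 < 0)]
  obtain ⟨j, rfl⟩ := Int.eq_ofNat_of_zero_le h
  cases j with
  | zero => simp [C]
  | succ j =>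
    rw [Nat.cast_succ, add_sub_cancel_right, ← Nat.cast_succ, C_natCast, C_natCast, C_natCast,
      Int.cast_sub, Int.cast_one, add_comm, ← Ring.choose_succ_succ, sub_add_cancel]

open Finset

section Convolution

variable (p q k : ℤ)

noncomputable def convTerm (a b c d t : ℤ) : ℚ :=
  C p (t + a) * C q (t + b) * C p (k - t + c) * C q (k - t + d)

noncomputable def convSum (a b c d : ℤ) : ℚ :=
  ∑ᶠ t, convTerm p q k a b c d t

variable {p q k}

lemma convTerm_eq_zero {a b c d t : ℤ} (h : t + a < 0 ∨ k - t + c < 0) :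
    convTerm p q k a b c d t = 0 := by
  rcases h with h | h <;> simp [convTerm, C_of_neg h]

lemma convSum_eq_sum_Icc {a b c d lo hi : ℤ} (hlo : lo ≤ -a) (hhi : k + c ≤ hi) :
    convSum p q k a b c d = ∑ t ∈ Icc lo hi, convTerm p q k a b c d t := by
  refine finsum_eq_finsetSum_of_support_subset _ fun t ht => ?_
  by_contra hout
  rw [coe_Icc, Set.mem_Icc] at hout
  exact ht (convTerm_eq_zero (by omega))

variable (p q k)

lemma convSum_shift (a b c d : ℤ) :
    convSum p q k a b c d = convSum p q k (a + 1) (b + 1) (c - 1) (d - 1) := by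
  rw [convSum, convSum, ← finsum_comp_equiv (Equiv.addRight 1)]
  refine finsum_congr fun t => ?_
  simp only [convTerm, Equiv.coe_addRight]
  ring_nf

lemma convSum_swap (a b c d : ℤ) : convSum p q k a b c d = convSum p q k c d a b := by
  rw [convSum, convSum, ← finsum_comp_equiv (Equiv.subLeft k)]
  refine finsum_congr fun t => ?_
  simp only [convTerm, Equiv.subLeft_apply]
  ring_nf

end Convolution

theorem key_identity_general (m n k : ℤ) :
    (∑ᶠ t₁ : ℤ,
      (C (m - 1) t₁ * C (n - 2) t₁ * C (m - 1) (k - t₁) * C (n - 2) (k - t₁)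
        - C (m - 1) ((k - t₁) + 1) * C (n - 2) (k - t₁) * C (m - 1) (t₁ - 1) * C (n - 2) t₁
        + C m (k - t₁) * C n (t₁ + 1) * C (m - 1) t₁ * C (n - 2) ((k - t₁) - 1)
        - C (m - 1) t₁ * C n (k - t₁) * C (m - 1) ((k - t₁) - 1) * C (n - 2) t₁
        - C (m - 1) t₁ * C (n - 1) t₁ * C (m - 1) (k - t₁) * C (n - 1) (k - t₁)))
      = 0 := by
  set T := convTerm (m - 1) (n - 2) k
  have pascal_n_sub_one : ∀ x, C (n - 1) x = C (n - 2) x + C (n - 2) (x - 1) := by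
    simpa only [sub_sub, one_add_one_eq_two] using C_pascal (n - 1)
  rw [finsum_congr (g := fun t =>
      (T 0 1 0 (-1) t - T (-1) 0 1 0 t) + (T 0 0 0 (-1) t - T 0 (-1) 0 0 t)
        + (T 0 1 (-1) (-1) t - T 0 0 (-1) 0 t) + (T 0 (-1) (-1) (-1) t - T 0 0 (-1) (-2) t))
    fun t => by simp only [T, convTerm, C_pascal m, C_pascal n, pascal_n_sub_one]; ring_nf]
  have window : ∀ {a b c d}, a ≤ 1 → c ≤ 1 →
      convSum (m - 1) (n - 2) k a b c d = ∑ t ∈ Icc (-1) (k + 1), T a b c d t :=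
    fun ha hc => convSum_eq_sum_Icc (by omega) (by omega)
  rw [finsum_eq_finsetSum_of_support_subset (s := Icc (-1) (k + 1)) _ ?support]
  · simp only [sum_add_distrib, sum_sub_distrib, ← window, Int.reduceLE]
    rw [convSum_shift _ _ _ (-1) 0 1 0, convSum_swap _ _ _ 0 (-1) 0 0,
      convSum_swap _ _ _ 0 0 (-1) 0, convSum_shift _ _ _ (-1) 0 0 0,
      convSum_swap _ _ _ 0 0 (-1) (-2), convSum_shift _ _ _ (-1) (-2) 0 0]
    norm_num
  · intro t ht
    by_contra hout
    rw [coe_Icc, Set.mem_Icc] at hout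
    have vanish : ∀ {a b c d}, a ≤ 1 → c ≤ 1 → T a b c d t = 0 :=
      fun _ _ => convTerm_eq_zero (by omega)
    exact ht (by simp only [vanish, Int.reduceLE]; ring)

theorem key_identity (m n k : ℤ) (hm : 2 < m) (hmn : m ≤ n) (hk : 1 ≤ k) :
    (∑ᶠ t₁ : ℤ,
      (C (m - 1) t₁ * C (n - 2) t₁ * C (m - 1) (k - t₁) * C (n - 2) (k - t₁)
        - C (m - 1) ((k - t₁) + 1) * C (n - 2) (k - t₁) * C (m - 1) (t₁ - 1) * C (n - 2) t₁
        + C m (k - t₁) * C n (t₁ + 1) * C (m - 1) t₁ * C (n - 2) ((k - t₁) - 1)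
        - C (m - 1) t₁ * C n (k - t₁) * C (m - 1) ((k - t₁) - 1) * C (n - 2) t₁
        - C (m - 1) t₁ * C (n - 1) t₁ * C (m - 1) (k - t₁) * C (n - 1) (k - t₁)))
      = 0 :=
  key_identity_general m n k
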